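/- arXiv:1211.6483 — 2 statements merged into one kernel-verified Lean document; each statement's English description precedes it below -/
import Mathlib

section
/- Let a₀, b₀, a₁, …, b_r, a_{r+1} be a V-path such that a₀ = S is a face sequence of type 1, and write a_j = S⁽ʲ⁾ for each j ≥ 0. If for some j with 1 ≤ j ≤ r+1 the sequence S⁽ʲ⁾ has a 0 at the position of the rightmost 1 of S, then a₀ ≠ a_{r+1}. -/
/-!
Let `i` be the rightmost `1` of `a₀`. Since `a₀` is of type 1, its rightmost `∗` lies left of `i`,
so every position right of `i` carries a `0`. Along a `V`-path no `0` at a position `≥ i` is ever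
lost: a matching move changes only the rightmost `1` or a position left of `i` (the leftmost `0`
precedes some `∗`, resp. for type 9 the rightmost `1`, as the sequence is not `v₀`), and passing to
a codimension-1 face keeps every non-`∗` entry. So a `0` at `i`, once created, survives until
`a_{r+1}`, whereas `a₀` has a `1` there.
-/

set_option linter.unusedVariables false

/-- The alphabet `{0, 1, ∗}` for face sequences. -/
inductive Letter : Type
  | zero
  | one
  | star
  deriving DecidableEq

/-- A sequence of length `n` over the alphabet `{0, 1, ∗}`. -/
abbrev FSeq (n : ℕ) := Fin n → Letter

/-- `S(1)`, the number of `1`'s in `S`. -/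
def count1 {n : ℕ} (S : FSeq n) : ℕ := (Finset.univ.filter fun i => S i = Letter.one).card

/-- `S(0)`, the number of `0`'s in `S`. -/
def count0 {n : ℕ} (S : FSeq n) : ℕ := (Finset.univ.filter fun i => S i = Letter.zero).card

/-- The number of `∗`'s in `S`. -/
def countStar {n : ℕ} (S : FSeq n) : ℕ := (Finset.univ.filter fun i => S i = Letter.star).card

/-- A face sequence: either no `∗` and exactly `k` ones, or at most `k-1` ones and
(#ones) + (#stars) ≥ `k+1`. -/
def FaceSeq {n : ℕ} (k : ℕ) (S : FSeq n) : Prop :=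
  (countStar S = 0 ∧ count1 S = k) ∨ (count1 S + 1 ≤ k ∧ k + 1 ≤ count1 S + countStar S)

/-- `v₀`, the sequence of `k` ones followed by `n - k` zeros. -/
def v0seq (n k : ℕ) : FSeq n := fun i => if (i : ℕ) < k then Letter.one else Letter.zero

/-- `S` contains at least one `∗`. -/
def hasStar {n : ℕ} (S : FSeq n) : Prop := ∃ i, S i = Letter.star

/-- There is a `1` to the right of the rightmost `∗` (in particular `S` contains a `∗`). -/
def OneRight {n : ℕ} (S : FSeq n) : Prop :=
  hasStar S ∧ ∃ i, S i = Letter.one ∧ ∀ j, i < j → S j ≠ Letter.star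

/-- There is no `1` to the right of the rightmost `∗` (and `S` contains a `∗`). -/
def NoOneRight {n : ℕ} (S : FSeq n) : Prop :=
  hasStar S ∧ ∀ i, S i = Letter.one → ∃ j, i < j ∧ S j = Letter.star

/-- There is a `0` to the left of the leftmost `∗` (in particular `S` contains a `∗`). -/
def ZeroLeft {n : ℕ} (S : FSeq n) : Prop :=
  hasStar S ∧ ∃ i, S i = Letter.zero ∧ ∀ j, j < i → S j ≠ Letter.star

/-- There is no `0` to the left of the leftmost `∗` (and `S` contains a `∗`). -/
def NoZeroLeft {n : ℕ} (S : FSeq n) : Prop :=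
  hasStar S ∧ ∀ i, S i = Letter.zero → ∃ j, j < i ∧ S j = Letter.star

/-- `i` is the position of the rightmost `1` of `S`. -/
def IsRightmostOne {n : ℕ} (S : FSeq n) (i : Fin n) : Prop :=
  S i = Letter.one ∧ ∀ j, i < j → S j ≠ Letter.one

/-- `i` is the position of the rightmost `∗` of `S`. -/
def IsRightmostStar {n : ℕ} (S : FSeq n) (i : Fin n) : Prop :=
  S i = Letter.star ∧ ∀ j, i < j → S j ≠ Letter.star

/-- `i` is the position of the leftmost `0` of `S`. -/
def IsLeftmostZero {n : ℕ} (S : FSeq n) (i : Fin n) : Prop :=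
  S i = Letter.zero ∧ ∀ j, j < i → S j ≠ Letter.zero

/-- `i` is the position of the leftmost `∗` of `S`. -/
def IsLeftmostStar {n : ℕ} (S : FSeq n) (i : Fin n) : Prop :=
  S i = Letter.star ∧ ∀ j, j < i → S j ≠ Letter.star

/-- Condition of rule (1), subcondition (a). -/
def Cond1a {n : ℕ} (k m0 m1 : ℕ) (S : FSeq n) : Prop :=
  count1 S + 1 ≤ k ∧ OneRight S ∧ count1 S ≠ m1

/-- Condition of rule (1), subcondition (b). -/
def Cond1b {n : ℕ} (k m0 m1 : ℕ) (S : FSeq n) : Prop :=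
  count1 S + 1 ≤ k ∧ OneRight S ∧ count1 S = m1 ∧ m0 < count0 S

/-- Condition of rule (1), subcondition (c): no `0` to the left of the leftmost `∗`. -/
def Cond1c {n : ℕ} (k m0 m1 : ℕ) (S : FSeq n) : Prop :=
  count1 S + 1 ≤ k ∧ OneRight S ∧ count1 S = m1 ∧ count0 S = m0 ∧ NoZeroLeft S

/-- Condition of rule (2), subcondition (a): here `count1 S + 1 ≠ m1` encodes `S(1) ≠ m₁ - 1`. -/
def Cond2a {n : ℕ} (k m0 m1 : ℕ) (S : FSeq n) : Prop :=
  count1 S + 2 ≤ k ∧ NoOneRight S ∧ count1 S + 1 ≠ m1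

/-- Condition of rule (2), subcondition (b). -/
def Cond2b {n : ℕ} (k m0 m1 : ℕ) (S : FSeq n) : Prop :=
  count1 S + 2 ≤ k ∧ NoOneRight S ∧ count1 S + 1 = m1 ∧ m0 < count0 S

/-- Condition of rule (2), subcondition (c). -/
def Cond2c {n : ℕ} (k m0 m1 : ℕ) (S : FSeq n) : Prop :=
  count1 S + 2 ≤ k ∧ NoOneRight S ∧ count1 S + 1 = m1 ∧ count0 S = m0 ∧ NoZeroLeft S

/-- `S` is of type 1 (satisfies the condition of rule (1)). -/
def Type1 {n : ℕ} (k m0 m1 : ℕ) (S : FSeq n) : Prop :=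
  Cond1a k m0 m1 S ∨ Cond1b k m0 m1 S ∨ Cond1c k m0 m1 S

/-- `S` is of type 2 (satisfies the condition of rule (2)). -/
def Type2 {n : ℕ} (k m0 m1 : ℕ) (S : FSeq n) : Prop :=
  Cond2a k m0 m1 S ∨ Cond2b k m0 m1 S ∨ Cond2c k m0 m1 S

/-- `S` is of type 3: `S(1) = k-1`, `S(0) ≤ n-k-1`, no `1` right of the rightmost `∗`,
a `0` left of the leftmost `∗`. -/
def Type3 {n : ℕ} (k : ℕ) (S : FSeq n) : Prop :=
  count1 S + 1 = k ∧ count0 S + k + 1 ≤ n ∧ NoOneRight S ∧ ZeroLeft S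

/-- `S` is of type 4: `S(1) = k-1`, `S(0) ≤ n-k-2`, no `1` right of the rightmost `∗`,
no `0` left of the leftmost `∗`. -/
def Type4 {n : ℕ} (k : ℕ) (S : FSeq n) : Prop :=
  count1 S + 1 = k ∧ count0 S + k + 2 ≤ n ∧ NoOneRight S ∧ NoZeroLeft S

/-- `S` is of type 5: `S(1) = m₁`, `S(0) ≤ m₀`, a `1` right of the rightmost `∗`,
a `0` left of the leftmost `∗`. -/
def Type5 {n : ℕ} (m0 m1 : ℕ) (S : FSeq n) : Prop :=
  count1 S = m1 ∧ count0 S ≤ m0 ∧ OneRight S ∧ ZeroLeft S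

/-- `S` is of type 6: `S(1) = m₁`, `S(0) < m₀`, a `1` right of the rightmost `∗`,
no `0` left of the leftmost `∗`. -/
def Type6 {n : ℕ} (m0 m1 : ℕ) (S : FSeq n) : Prop :=
  count1 S = m1 ∧ count0 S < m0 ∧ OneRight S ∧ NoZeroLeft S

/-- `S` is of type 7: `S(1) = m₁-1`, `S(0) ≤ m₀`, no `1` right of the rightmost `∗`,
a `0` left of the leftmost `∗`. -/
def Type7 {n : ℕ} (m0 m1 : ℕ) (S : FSeq n) : Prop :=
  count1 S + 1 = m1 ∧ count0 S ≤ m0 ∧ NoOneRight S ∧ ZeroLeft S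

/-- `S` is of type 8: `S(1) = m₁-1`, `S(0) < m₀`, no `1` right of the rightmost `∗`,
no `0` left of the leftmost `∗`. -/
def Type8 {n : ℕ} (m0 m1 : ℕ) (S : FSeq n) : Prop :=
  count1 S + 1 = m1 ∧ count0 S < m0 ∧ NoOneRight S ∧ NoZeroLeft S

/-- `S` is of type 9: `S(1) = k`, `S(0) = n-k`, and `S ≠ v₀`. -/
def Type9 {n : ℕ} (k : ℕ) (S : FSeq n) : Prop :=
  count1 S = k ∧ count0 S + k = n ∧ S ≠ v0seq n k

/-- `S` is of type 10: `S(1) = k-1`, `S(0) = n-k-1`, no `1` right of the rightmost `∗`,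
no `0` left of the leftmost `∗`. -/
def Type10 {n : ℕ} (k : ℕ) (S : FSeq n) : Prop :=
  count1 S + 1 = k ∧ count0 S + k + 1 = n ∧ NoOneRight S ∧ NoZeroLeft S

/-- `S` is of type `i` for `1 ≤ i ≤ 10` (and of no type otherwise). -/
def OfType {n : ℕ} (k m0 m1 : ℕ) (i : ℕ) (S : FSeq n) : Prop :=
  match i with
  | 1 => Type1 k m0 m1 S
  | 2 => Type2 k m0 m1 S
  | 3 => Type3 k S
  | 4 => Type4 k S
  | 5 => Type5 m0 m1 S
  | 6 => Type6 m0 m1 S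
  | 7 => Type7 m0 m1 S
  | 8 => Type8 m0 m1 S
  | 9 => Type9 k S
  | 10 => Type10 k S
  | _ => False

/-- The replacement of rule (1): replace the rightmost `1` with `∗`. -/
def Apply1 {n : ℕ} (S S' : FSeq n) : Prop :=
  ∃ i, IsRightmostOne S i ∧ S' = Function.update S i Letter.star

/-- The replacement of rule (2): replace the rightmost `∗` with `1`. -/
def Apply2 {n : ℕ} (S S' : FSeq n) : Prop :=
  ∃ i, IsRightmostStar S i ∧ S' = Function.update S i Letter.one

/-- The replacement of rules (3), (5) and (7): replace the leftmost `0` with `∗`. -/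
def Apply3 {n : ℕ} (S S' : FSeq n) : Prop :=
  ∃ i, IsLeftmostZero S i ∧ S' = Function.update S i Letter.star

/-- The replacement of rules (4), (6) and (8): replace the leftmost `∗` with `0`. -/
def Apply4 {n : ℕ} (S S' : FSeq n) : Prop :=
  ∃ i, IsLeftmostStar S i ∧ S' = Function.update S i Letter.zero

/-- The replacement of rule (9): replace the leftmost `0` and the rightmost `1` each with `∗`. -/
def Apply9 {n : ℕ} (S S' : FSeq n) : Prop :=
  ∃ i j, IsLeftmostZero S i ∧ IsRightmostOne S j ∧
    S' = Function.update (Function.update S i Letter.star) j Letter.star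

/-- The replacement of rule (10): replace the leftmost `∗` with `0` and the other `∗` with `1`. -/
def Apply10 {n : ℕ} (S S' : FSeq n) : Prop :=
  ∃ i j, IsLeftmostStar S i ∧ IsRightmostStar S j ∧ i ≠ j ∧
    S' = Function.update (Function.update S i Letter.zero) j Letter.one

/-- The matching `V` on face sequences: a face sequence `S` of type 1, 3, 5, 7 or 9 is
matched with the result `S'` of applying the corresponding rule to it. -/
def Vmatch {n : ℕ} (k m0 m1 : ℕ) (S S' : FSeq n) : Prop :=
  FaceSeq k S ∧
    ((Type1 k m0 m1 S ∧ Apply1 S S') ∨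
     (Type3 k S ∧ Apply3 S S') ∨
     (Type5 m0 m1 S ∧ Apply3 S S') ∨
     (Type7 m0 m1 S ∧ Apply3 S S') ∨
     (Type9 k S ∧ Apply9 S S'))

/-- The vertex set of a face sequence `S`: the vertex sequences (0/1-sequences with
exactly `k` ones) agreeing with `S` wherever `S` is not `∗`. -/
def VertexSet {n : ℕ} (k : ℕ) (S : FSeq n) : Set (FSeq n) :=
  {v | (∀ i, v i ≠ Letter.star) ∧ count1 v = k ∧ ∀ i, S i ≠ Letter.star → v i = S i}

/-- The dimension of the face `F(S)`. -/
def fdim {n : ℕ} (S : FSeq n) : ℕ :=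
  if countStar S = 0 then 0 else countStar S - 1

/-- `T` is a codimension-1 face of `S`. -/
def Codim1 {n : ℕ} (k : ℕ) (T S : FSeq n) : Prop :=
  VertexSet k T ⊂ VertexSet k S ∧ fdim T + 1 = fdim S

/-- A (nontrivial) `V`-path `a₀, b₀, a₁, b₁, …, b_r, a_{r+1}` of face sequences. -/
structure VPath (n k m0 m1 r : ℕ) where
  a : Fin (r + 2) → FSeq n
  b : Fin (r + 1) → FSeq n
  face_a : ∀ i, FaceSeq k (a i)
  face_b : ∀ i, FaceSeq k (b i)
  mem : ∀ i : Fin (r + 1), Vmatch k m0 m1 (a i.castSucc) (b i)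
  codim_left : ∀ i : Fin (r + 1), Codim1 k (a i.castSucc) (b i)
  codim_right : ∀ i : Fin (r + 1), Codim1 k (a i.succ) (b i)
  step_ne : ∀ i : Fin (r + 1), a i.castSucc ≠ a i.succ

open Finset

namespace Letter

lemma eq_one_of_ne {l : Letter} (h0 : l ≠ zero) (hs : l ≠ star) : l = one := by
  cases l <;> simp_all

lemma eq_zero_of_ne {l : Letter} (h1 : l ≠ one) (hs : l ≠ star) : l = zero := by
  cases l <;> simp_all

end Letter

variable {n k m0 m1 : ℕ}

lemma count0_add_count1_add_countStar (S : FSeq n) : count0 S + count1 S + countStar S = n := by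
  simp only [count0, count1, countStar, card_filter, ← sum_add_distrib]
  calc ∑ i, ((if S i = .zero then 1 else 0) + (if S i = .one then 1 else 0) +
          (if S i = .star then 1 else 0))
      = ∑ _i : Fin n, 1 := sum_congr rfl fun i _ => by cases S i <;> rfl
    _ = n := by simp

lemma ne_star_of_countStar_eq_zero {S : FSeq n} (h : countStar S = 0) (p : Fin n) :
    S p ≠ .star := by
  simp only [countStar, card_eq_zero, filter_eq_empty_iff, mem_univ, true_implies] at h
  exact @h p

lemma count1_v0seq (m : ℕ) : count1 (v0seq n m) = min n m := by
  simp [count1, v0seq, Fin.card_filter_val_lt]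

def fillStars (T : FSeq n) (A : Finset (Fin n)) : FSeq n :=
  fun p => if T p = .star then (if p ∈ A then .one else .zero) else T p

lemma fillStars_mem_vertexSet {T : FSeq n} {A : Finset (Fin n)}
    (hA : A ⊆ univ.filter fun p => T p = .star) (hcard : count1 T + #A = k) :
    fillStars T A ∈ VertexSet k T := by
  refine ⟨fun p => ?_, ?_, fun p hp => if_neg hp⟩
  · unfold fillStars; split_ifs <;> simp_all
  · have hones : (univ.filter fun p => fillStars T A p = .one) =
        (univ.filter fun p => T p = .one) ∪ A := by
      ext p
      have hpA : p ∈ A → T p = .star := fun h => (mem_filter.mp (hA h)).2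
      rw [mem_union, mem_filter, mem_filter]
      by_cases hp : T p = .star <;> simp_all [fillStars]
    have hdisj : Disjoint (univ.filter fun p => T p = .one) A :=
      disjoint_left.mpr fun p hp hpA => by simp_all [(mem_filter.mp (hA hpA)).2]
    rw [count1, hones, card_union_of_disjoint hdisj, ← hcard]
    rfl

lemma exists_mem_vertexSet_eq_one {T : FSeq n} (hT : FaceSeq k T) {q : Fin n}
    (hq : T q ≠ .zero) : ∃ v ∈ VertexSet k T, v q = .one := by
  set stars : Finset (Fin n) := univ.filter fun p => T p = .star
  have hstars : #stars = countStar T := rfl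
  by_cases hqs : T q = .star
  · have hbound : count1 T + 1 ≤ k ∧ k + 1 ≤ count1 T + countStar T :=
      hT.resolve_left fun h => ne_star_of_countStar_eq_zero h.1 q hqs
    obtain ⟨A, hqA, hA, hcard⟩ := exists_subsuperset_card_eq (s := {q}) (t := stars)
      (n := k - count1 T) (by simpa [stars] using hqs) (by simp; omega) (by omega)
    refine ⟨fillStars T A, fillStars_mem_vertexSet hA (by omega), ?_⟩
    simp [fillStars, hqs, singleton_subset_iff.mp hqA]
  · have hbound : count1 T ≤ k ∧ k ≤ count1 T + countStar T := by rcases hT with h | h <;> omega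
    obtain ⟨A, hA, hcard⟩ := exists_subset_card_eq (s := stars) (n := k - count1 T) (by omega)
    refine ⟨fillStars T A, fillStars_mem_vertexSet hA (by omega), ?_⟩
    simpa [fillStars, hqs] using Letter.eq_one_of_ne hq hqs

lemma eq_zero_of_vertexSet_subset {T S : FSeq n} (hT : FaceSeq k T)
    (hsub : VertexSet k T ⊆ VertexSet k S) {q : Fin n} (hq : S q = .zero) : T q = .zero := by
  by_contra hTq
  obtain ⟨v, hv, hvq⟩ := exists_mem_vertexSet_eq_one hT hTq
  have := (hsub hv).2.2 q (by simp [hq])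
  simp_all

def ZerosAbove (i : Fin n) (S : FSeq n) : Prop :=
  ∀ q, i < q → S q = .zero

lemma ZerosAbove.le_of_ne_zero {i p : Fin n} {S : FSeq n} (hS : ZerosAbove i S)
    (hp : S p ≠ .zero) : p ≤ i :=
  not_lt.mp fun h => hp (hS p h)

lemma zerosAbove_of_oneRight {i : Fin n} {S : FSeq n} (hS : OneRight S)
    (hi : IsRightmostOne S i) : ZerosAbove i S := by
  obtain ⟨-, p, hp, hstar⟩ := hS
  have hpi : p ≤ i := not_lt.mp fun h => hi.2 p h hp
  exact fun q hq => Letter.eq_zero_of_ne (hi.2 q hq) (hstar q (lt_of_le_of_lt hpi hq))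

lemma IsLeftmostZero.exists_star_gt {p : Fin n} {S : FSeq n} (hp : IsLeftmostZero S p)
    (hS : ZeroLeft S) : ∃ s, p < s ∧ S s = .star := by
  obtain ⟨⟨s, hs⟩, z, hz, hzs⟩ := hS
  have hpz : p ≤ z := not_lt.mp fun h => hp.2 z h hz
  have hzs : z < s := lt_of_le_of_ne (not_lt.mp fun h => hzs s h hs) fun h => by simp_all
  exact ⟨s, lt_of_le_of_lt hpz hzs, hs⟩

lemma IsLeftmostZero.lt_of_type9 {S : FSeq n} (hS : Type9 k S) {p q : Fin n}
    (hp : IsLeftmostZero S p) (hq : IsRightmostOne S q) : p < q := by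
  obtain ⟨hcount1, hcount0, hne⟩ := hS
  by_contra! hqp
  replace hqp : q < p := lt_of_le_of_ne hqp fun h => by simp_all [IsLeftmostZero, IsRightmostOne]
  have hnostar : ∀ w, S w ≠ .star := ne_star_of_countStar_eq_zero <| by
    have := count0_add_count1_add_countStar S
    omega
  have hSp : S = v0seq n p := funext fun w => by
    by_cases hw : w < p
    · simpa [v0seq, hw] using Letter.eq_one_of_ne (hp.2 w hw) (hnostar w)
    · simpa [v0seq, hw] using
        Letter.eq_zero_of_ne (hq.2 w (lt_of_lt_of_le hqp (not_lt.mp hw))) (hnostar w)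
  have hk : k = p := by rw [← hcount1, hSp, count1_v0seq, min_eq_right p.isLt.le]
  exact hne (hk ▸ hSp)

lemma Vmatch.eq_zero_of_zerosAbove {A B : FSeq n} (hV : Vmatch k m0 m1 A B) {i q : Fin n}
    (hA : ZerosAbove i A) (hiq : i ≤ q) (hq : A q = .zero) : B q = .zero := by
  have hne_of_lt {p : Fin n} (hp : p < i) : q ≠ p := (lt_of_lt_of_le hp hiq).ne'
  have hne_of_one {p : Fin n} (hp : A p = .one) : q ≠ p := by rintro rfl; simp_all
  have hleftmostZero {p : Fin n} (hp : IsLeftmostZero A p) (hA' : ZeroLeft A) : q ≠ p := by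
    obtain ⟨s, hps, hs⟩ := hp.exists_star_gt hA'
    exact hne_of_lt (lt_of_lt_of_le hps (hA.le_of_ne_zero (by simp [hs])))
  rcases hV.2 with ⟨-, p, hp, rfl⟩ | ⟨ht, p, hp, rfl⟩ | ⟨ht, p, hp, rfl⟩ | ⟨ht, p, hp, rfl⟩ |
    ⟨ht, p, p', hp, hp', rfl⟩
  · rwa [Function.update_of_ne (hne_of_one hp.1)]
  · rwa [Function.update_of_ne (hleftmostZero hp ht.2.2.2)]
  · rwa [Function.update_of_ne (hleftmostZero hp ht.2.2.2)]
  · rwa [Function.update_of_ne (hleftmostZero hp ht.2.2.2)]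
  · have hpi : p < i :=
      lt_of_lt_of_le (hp.lt_of_type9 ht hp') (hA.le_of_ne_zero (by simp [hp'.1]))
    rwa [Function.update_of_ne (hne_of_one hp'.1), Function.update_of_ne (hne_of_lt hpi)]

namespace VPath

variable {r : ℕ} (P : VPath n k m0 m1 r) {i : Fin n}

lemma eq_zero_succ (j : Fin (r + 1)) (hA : ZerosAbove i (P.a j.castSucc)) {q : Fin n}
    (hiq : i ≤ q) (hq : P.a j.castSucc q = .zero) : P.a j.succ q = .zero :=
  eq_zero_of_vertexSet_subset (P.face_a _) (P.codim_right j).1.subset <|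
    (P.mem j).eq_zero_of_zerosAbove hA hiq hq

lemma zerosAbove (h : ZerosAbove i (P.a 0)) (j : Fin (r + 2)) : ZerosAbove i (P.a j) := by
  induction j using Fin.induction with
  | zero => exact h
  | succ j ih => exact fun q hq => P.eq_zero_succ j ih hq.le (ih q hq)

lemma eq_zero_of_le (h : ZerosAbove i (P.a 0)) {j j' : Fin (r + 2)} (hjj' : j ≤ j')
    (hj : P.a j i = .zero) : P.a j' i = .zero := by
  induction j' using Fin.induction with
  | zero => rwa [← nonpos_iff_eq_zero.mp hjj']
  | succ j' ih =>
    rcases hjj'.lt_or_eq with hlt | rfl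
    · exact P.eq_zero_succ j' (P.zerosAbove h _) le_rfl (ih (Fin.le_castSucc_iff.mpr hlt))
    · exact hj

end VPath

theorem vpath_type1_zero_fixed_general (n k m0 m1 : ℕ) (r : ℕ)
    (P : VPath n k m0 m1 r) (h0 : Type1 k m0 m1 (P.a 0))
    (hj : ∃ j : Fin (r + 2), j ≠ 0 ∧
      ∃ i, IsRightmostOne (P.a 0) i ∧ P.a j i = Letter.zero) :
    P.a 0 ≠ P.a (Fin.last (r + 1)) := by
  obtain ⟨j, -, i, hi, hji⟩ := hj
  have honeRight : OneRight (P.a 0) := by rcases h0 with h | h | h <;> exact h.2.1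
  have hlast : P.a (Fin.last (r + 1)) i = .zero :=
    P.eq_zero_of_le (zerosAbove_of_oneRight honeRight hi) (Fin.le_last j) hji
  intro heq
  simp [← heq, hi.1] at hlast

/-- Let `a₀, b₀, a₁, …, b_r, a_{r+1}` be a `V`-path with `a₀` of type 1.
If for some `j ≥ 1` the sequence `a_j` has a `0` at the position of the rightmost `1` of
`a₀`, then `a₀ ≠ a_{r+1}`. -/
theorem vpath_type1_zero_fixed (n k m0 m1 : ℕ) (hk1 : 1 ≤ k) (hk2 : k ≤ n - 1)
    (hm0 : m0 + k + 1 ≤ n) (hm1l : 1 ≤ m1) (hm1u : m1 + 1 ≤ k) (r : ℕ)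
    (P : VPath n k m0 m1 r) (h0 : Type1 k m0 m1 (P.a 0))
    (hj : ∃ j : Fin (r + 2), j ≠ 0 ∧
      ∃ i, IsRightmostOne (P.a 0) i ∧ P.a j i = Letter.zero) :
    P.a 0 ≠ P.a (Fin.last (r + 1)) :=
  vpath_type1_zero_fixed_general n k m0 m1 r P h0 hj
end

section
/- There is no nontrivial closed V-path a₀, b₀, a₁, …, b_r, a_{r+1} in which a₀ is a vertex, i.e., a face sequence containing no ∗. -/
set_option linter.unusedVariables false

/-!
A vertex can only be matched by rule (9), which stars its leftmost `0` (at `i`) and its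
rightmost `1` (at `j`); since the vertex is not `v₀`, `i < j`. The codimension-1 faces of this
edge are its two endpoints, so the next vertex of the path is obtained by moving the `1` at `j`
to `i`. Hence every step of a V-path starting at a vertex stays among vertices and strictly
decreases the sum of the positions of the `1`'s, and the path cannot close up.
-/

open Finset Function

def weight {n : ℕ} (S : FSeq n) : ℕ := ∑ i with S i = Letter.one, (i : ℕ)

theorem Fintype.sum_add_pair_eq_of_eq_off_pair {ι M : Type*} [Fintype ι] [DecidableEq ι]
    [AddCommMonoid M] {f g : ι → M} {i j : ι} (hij : i ≠ j)
    (hfg : ∀ x, x ≠ i → x ≠ j → f x = g x) :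
    ∑ x, f x + (g i + g j) = ∑ x, g x + (f i + f j) := by
  have hcompl : ∑ x ∈ {i, j}ᶜ, f x = ∑ x ∈ {i, j}ᶜ, g x :=
    Finset.sum_congr rfl fun x hx => by
      simp only [mem_compl, mem_insert, mem_singleton, not_or] at hx
      exact hfg x hx.1 hx.2
  rw [← sum_add_sum_compl {i, j} f, ← sum_add_sum_compl {i, j} g, sum_pair hij, sum_pair hij,
    hcompl]
  abel

variable {n k : ℕ} {S T : FSeq n}

theorem countStar_eq_zero_iff : countStar S = 0 ↔ ∀ i, S i ≠ Letter.star := by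
  simp [countStar, filter_eq_empty_iff]

theorem FaceSeq.count1_eq (hS : FaceSeq k S) (h : countStar S = 0) : count1 S = k := by
  rcases hS with ⟨-, h1⟩ | ⟨h1, h2⟩ <;> omega

theorem FaceSeq.countStar_ne_one (hS : FaceSeq k S) : countStar S ≠ 1 := by
  rcases hS with ⟨h0, -⟩ | ⟨h1, h2⟩ <;> omega

theorem FaceSeq.mem_vertexSet_self (hS : FaceSeq k S) (h : countStar S = 0) :
    S ∈ VertexSet k S :=
  ⟨countStar_eq_zero_iff.1 h, hS.count1_eq h, fun _ _ => rfl⟩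

theorem FaceSeq.countStar_eq_zero_of_codim1 (hT : FaceSeq k T) (hC : Codim1 k T S)
    (hS : countStar S = 2) : countStar T = 0 := by
  have hdim := hC.2
  have hne := hT.countStar_ne_one
  simp only [fdim, hS] at hdim
  split_ifs at hdim <;> omega

theorem Vmatch.type9_of_countStar_eq_zero {m0 m1 : ℕ} {S' : FSeq n}
    (hV : Vmatch k m0 m1 S S') (h : countStar S = 0) : Type9 k S ∧ Apply9 S S' := by
  have hno : ¬ hasStar S := fun ⟨x, hx⟩ => countStar_eq_zero_iff.1 h x hx
  rcases hV.2 with ⟨h1 | h1 | h1, -⟩ | ⟨h3, -⟩ | ⟨h5, -⟩ | ⟨h7, -⟩ | h9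
  · exact absurd h1.2.1.1 hno
  · exact absurd h1.2.1.1 hno
  · exact absurd h1.2.1.1 hno
  · exact absurd h3.2.2.1.1 hno
  · exact absurd h5.2.2.1.1 hno
  · exact absurd h7.2.2.1.1 hno
  · exact h9

theorem IsLeftmostZero.lt_of_isRightmostOne {i j : Fin n} (hi : IsLeftmostZero S i)
    (hj : IsRightmostOne S j) (hS : ∀ x, S x ≠ Letter.star) (hv : S ≠ v0seq n (count1 S)) :
    i < j := by
  refine lt_of_not_ge fun hji => hv ?_
  have hji : j < i := lt_of_le_of_ne hji fun h => by
    simpa [h, hi.1] using hj.1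
  have hone : ∀ x, S x = Letter.one ↔ x ≤ j := fun x =>
    ⟨fun hx => not_lt.1 fun hjx => hj.2 x hjx hx, fun hx => by
      cases hSx : S x
      · exact absurd hSx (hi.2 x (hx.trans_lt hji))
      · rfl
      · exact absurd hSx (hS x)⟩
  have hcount : count1 S = j + 1 := by
    rw [count1, filter_congr fun x _ => hone x, filter_ge_eq_Iic, Fin.card_Iic]
  funext x
  rw [v0seq, hcount]
  by_cases hx : x ≤ j
  · rw [(hone x).2 hx, if_pos (Nat.lt_succ_of_le hx)]
  · rw [if_neg (by simpa [Nat.lt_succ_iff] using hx)]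
    cases hSx : S x
    · rfl
    · exact absurd ((hone x).1 hSx) hx
    · exact absurd hSx (hS x)

theorem countStar_update_star_update_star (hS : ∀ x, S x ≠ Letter.star) {i j : Fin n}
    (hij : i ≠ j) : countStar (update (update S i Letter.star) j Letter.star) = 2 := by
  have hstars : (univ.filter fun x => update (update S i Letter.star) j Letter.star x =
      Letter.star) = {i, j} := by
    ext x
    by_cases hxj : x = j
    · simp [hxj]
    · by_cases hxi : x = i
      · simp [hxi, hij]
      · simp [hxi, hxj, hS x]
  rw [countStar, hstars, card_pair hij]

/-- The hypotheses force `T` to be `S` with its `1` at `j` moved to `i`. -/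
theorem weight_add_eq_of_eq_off_pair {i j : Fin n} (hij : i ≠ j) (hSi : S i = Letter.zero)
    (hSj : S j = Letter.one) (hTi : T i ≠ Letter.star) (hTj : T j ≠ Letter.star)
    (hTS : ∀ x, x ≠ i → x ≠ j → T x = S x) (hcount : count1 T = count1 S) (hne : T ≠ S) :
    weight T + j = weight S + i := by
  have key (g : Fin n → ℕ) := Fintype.sum_add_pair_eq_of_eq_off_pair hij
    (f := fun x => if T x = Letter.one then g x else 0)
    (g := fun x => if S x = Letter.one then g x else 0)
    fun x hxi hxj => by rw [hTS x hxi hxj]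
  simp only [← sum_filter, hSi, hSj, reduceCtorEq, if_false, if_true, zero_add] at key
  have hc := key 1
  have hw := key (↑)
  simp only [Pi.one_apply, ← card_eq_sum_ones] at hc
  rw [← count1, ← count1, hcount] at hc
  cases hTi' : T i <;> cases hTj' : T j <;> simp [hTi', hTj'] at hc hTi hTj
  · exact absurd (funext fun x => if hxi : x = i then by simp [hxi, hTi', hSi] else
      if hxj : x = j then by simp [hxj, hTj', hSj] else hTS x hxi hxj) hne
  · simpa [hTi', hTj', weight] using hw

theorem Vmatch.weight_lt_of_codim1 {m0 m1 : ℕ} {S' : FSeq n} (hS : countStar S = 0)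
    (hV : Vmatch k m0 m1 S S') (hT : FaceSeq k T) (hC : Codim1 k T S') (hne : T ≠ S) :
    countStar T = 0 ∧ weight T < weight S := by
  obtain ⟨⟨hk, -, hv0⟩, i, j, hi, hj, rfl⟩ := hV.type9_of_countStar_eq_zero hS
  have hSstar := countStar_eq_zero_iff.1 hS
  have hij : i < j := hi.lt_of_isRightmostOne hj hSstar (hk ▸ hv0)
  have hT0 : countStar T = 0 :=
    hT.countStar_eq_zero_of_codim1 hC (countStar_update_star_update_star hSstar hij.ne)
  obtain ⟨hTstar, hTk, hagree⟩ := hC.1.subset (hT.mem_vertexSet_self hT0)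
  have hTS : ∀ x, x ≠ i → x ≠ j → T x = S x := fun x hxi hxj => by
    simpa [hxi, hxj] using hagree x (by simpa [hxi, hxj] using hSstar x)
  have := weight_add_eq_of_eq_off_pair hij.ne hi.1 hj.1 (hTstar i) (hTstar j) hTS
    (hTk.trans hk.symm) hne
  exact ⟨hT0, by omega⟩

theorem VPath.countStar_eq_zero_and_weight_add_le {m0 m1 r : ℕ} (P : VPath n k m0 m1 r)
    (h0 : countStar (P.a 0) = 0) (t : Fin (r + 2)) :
    countStar (P.a t) = 0 ∧ weight (P.a t) + t ≤ weight (P.a 0) := by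
  induction t using Fin.induction with
  | zero => exact ⟨h0, by simp⟩
  | succ t ih =>
    obtain ⟨hstar, hlt⟩ := (P.mem t).weight_lt_of_codim1 ih.1 (P.face_a t.succ)
      (P.codim_right t) (P.step_ne t).symm
    refine ⟨hstar, ?_⟩
    have := ih.2
    simp only [Fin.val_succ, Fin.val_castSucc] at this ⊢
    omega

theorem no_closed_vpath_vertex_general (n k m0 m1 : ℕ) (r : ℕ)
    (P : VPath n k m0 m1 r) (h0 : countStar (P.a 0) = 0) :
    P.a 0 ≠ P.a (Fin.last (r + 1)) := by
  intro hclosed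
  have h := (P.countStar_eq_zero_and_weight_add_le h0 (Fin.last (r + 1))).2
  rw [← hclosed, Fin.val_last] at h
  omega

/-- There is no nontrivial closed `V`-path starting at a vertex, i.e. at
a face sequence containing no `∗`. -/
theorem no_closed_vpath_vertex (n k m0 m1 : ℕ) (hk1 : 1 ≤ k) (hk2 : k ≤ n - 1)
    (hm0 : m0 + k + 1 ≤ n) (hm1l : 1 ≤ m1) (hm1u : m1 + 1 ≤ k) (r : ℕ)
    (P : VPath n k m0 m1 r) (h0 : countStar (P.a 0) = 0) :
    P.a 0 ≠ P.a (Fin.last (r + 1)) :=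
  no_closed_vpath_vertex_general n k m0 m1 r P h0
end
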